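/- arXiv:0903.2836 — 2 statements merged into one kernel-verified Lean document; each statement's English description precedes it below -/
import Mathlib

section
/- Let K₁ and K₂ be compact convex sets in ℝⁿ (n ≥ 3), each with more than one point, such that for every hyperplane L of ℝⁿ the orthogonal projections π_L(K₁) and π_L(K₂) are homothetic. Suppose [x₀, z₀] is a common exposed diameter of K₁ and K₂ with midpoint at the origin o, and suppose there exist opposite closed halfspaces P₀ and Q₀ whose boundary hyperplanes are orthogonal to the segment [x₀, z₀], with K₁ ∩ P₀ = K₂ ∩ P₀ = {x₀} and K₁ ∩ Q₀ = K₂ ∩ Q₀ = {z₀}. Then K₂ = K₁ or K₂ = −K₁. -/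
open scoped RealInnerProductSpace Pointwise

/-- Nonempty sets `X₁` and `X₂` in `ℝⁿ` are *homothetic* provided
`X₁ = z + λ • X₂` for some point `z` and some scalar `λ ≠ 0`. -/
def Homothetic {n : ℕ} (X₁ X₂ : Set (EuclideanSpace ℝ (Fin n))) : Prop :=
  ∃ (z : EuclideanSpace ℝ (Fin n)) (l : ℝ), l ≠ 0 ∧ X₁ = (fun x => z + l • x) '' X₂

/-- The orthogonal projection of `ℝⁿ` onto the plane `p + L`. -/
noncomputable def planeProj {n : ℕ} (p : EuclideanSpace ℝ (Fin n))
    (L : Submodule ℝ (EuclideanSpace ℝ (Fin n))) (x : EuclideanSpace ℝ (Fin n)) :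
    EuclideanSpace ℝ (Fin n) :=
  p + (L.orthogonalProjectionOnto (x - p) : EuclideanSpace ℝ (Fin n))

/-! In a hyperplane containing the diameter direction `g`, both projections still have `±x₀` as
their unique highest and lowest points in direction `g`, which forces the homothety between them
to be `±id`. So for every direction `y` the support functions satisfy `h₁(±y) = h₂(±y)` or
`h₁(±y) = h₂(∓y)`; in particular `K₁` and `K₂` have the same widths. In a hyperplane through two
arbitrary directions `a, b`, equal widths force the homothety ratio to be `±1`, so there
`h₁ - h₂` or `h₁ - h₂ ∘ neg` is linear. Off the kernel of that linear function the other
alternative must hold, and by continuity it then holds on the whole hyperplane; hence one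
alternative holds at every direction, and support functions determine compact convex sets. -/

section SupportFunction

variable {F : Type*} [NormedAddCommGroup F] [InnerProductSpace ℝ F] {K : Set F}

noncomputable def supportFun (K : Set F) (y : F) : ℝ := sSup ((fun x => ⟪y, x⟫) '' K)

lemma bddAbove_image_inner (hK : IsCompact K) (y : F) : BddAbove ((fun x => ⟪y, x⟫) '' K) :=
  hK.bddAbove_image (continuous_const.inner continuous_id).continuousOn

lemma inner_le_supportFun (hK : IsCompact K) {x : F} (hx : x ∈ K) (y : F) :
    ⟪y, x⟫ ≤ supportFun K y :=
  le_csSup (bddAbove_image_inner hK y) (Set.mem_image_of_mem _ hx)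

lemma supportFun_le (hK : K.Nonempty) {y : F} {u : ℝ} (h : ∀ x ∈ K, ⟪y, x⟫ ≤ u) :
    supportFun K y ≤ u :=
  csSup_le (hK.image _) (Set.forall_mem_image.2 h)

lemma supportFun_nonneg (hK : IsCompact K) (h0 : (0 : F) ∈ K) (y : F) : 0 ≤ supportFun K y := by
  simpa using inner_le_supportFun hK h0 y

lemma supportFun_neg_set (y : F) : supportFun (-K) y = supportFun K (-y) := by
  simp only [supportFun, ← Set.image_neg_eq_neg, Set.image_image, inner_neg_right, inner_neg_left]

lemma continuous_supportFun (hK : IsCompact K) : Continuous (supportFun K) :=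
  hK.continuous_sSup (f := fun y x => ⟪y, x⟫) continuous_inner

lemma supportFun_smul {c : ℝ} (hc : 0 ≤ c) (y : F) :
    supportFun K (c • y) = c * supportFun K y := by
  simp only [supportFun, real_inner_smul_left]
  rw [← smul_eq_mul, ← Real.sSup_smul_of_nonneg hc, ← Set.image_smul, Set.image_image]
  rfl

lemma supportFun_homothety (hK : IsCompact K) (hne : K.Nonempty) (z : F) (l : ℝ) (y : F) :
    supportFun ((fun x => z + l • x) '' K) y = ⟪y, z⟫ + supportFun K (l • y) := by
  simp only [supportFun, Set.image_image, inner_add_right, real_inner_smul_right,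
    real_inner_smul_left]
  have hbdd : BddAbove ((fun x => l * ⟪y, x⟫) '' K) := by
    simpa only [real_inner_smul_left] using bddAbove_image_inner hK (l • y)
  rw [← Set.image_image (⟪y, z⟫ + ·) (fun x => l * ⟪y, x⟫)]
  exact ((OrderIso.addLeft ⟪y, z⟫).map_csSup' (hne.image _) hbdd).symm

variable [CompleteSpace F]

lemma subset_of_supportFun_le {K₁ K₂ : Set F} (hc₁ : IsCompact K₁) (hcv₂ : Convex ℝ K₂)
    (hcl₂ : IsClosed K₂) (hne₂ : K₂.Nonempty) (h : ∀ y, supportFun K₁ y ≤ supportFun K₂ y) :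
    K₁ ⊆ K₂ := by
  intro x hx
  by_contra hxK
  obtain ⟨f, u, hfK, hfx⟩ := geometric_hahn_banach_closed_point hcv₂ hcl₂ hxK
  set y := (InnerProductSpace.toDual ℝ F).symm f
  have hy : ∀ v, ⟪y, v⟫ = f v := fun v => InnerProductSpace.toDual_symm_apply
  have h₂ : supportFun K₂ y ≤ u := supportFun_le hne₂ fun b hb => (hy b).trans_le (hfK b hb).le
  have h₁ : f x ≤ supportFun K₁ y := hy x ▸ inner_le_supportFun hc₁ hx y
  linarith [h y]

lemma eq_of_supportFun_eq {K₁ K₂ : Set F} (hc₁ : IsCompact K₁) (hc₂ : IsCompact K₂)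
    (hcv₁ : Convex ℝ K₁) (hcv₂ : Convex ℝ K₂) (hne₁ : K₁.Nonempty) (hne₂ : K₂.Nonempty)
    (h : supportFun K₁ = supportFun K₂) : K₁ = K₂ :=
  (subset_of_supportFun_le hc₁ hcv₂ hc₂.isClosed hne₂ fun y => (congrFun h y).le).antisymm
    (subset_of_supportFun_le hc₂ hcv₁ hc₁.isClosed hne₁ fun y => (congrFun h y).ge)

end SupportFunction

section UniqueMaximizer

variable {F : Type*} [NormedAddCommGroup F] [InnerProductSpace ℝ F]

def IsUniqueMaximizer (g : F) (K : Set F) (p : F) : Prop :=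
  p ∈ K ∧ ∀ x ∈ K, x ≠ p → ⟪g, x⟫ < ⟪g, p⟫

variable {g p : F} {K : Set F}

lemma IsUniqueMaximizer.inner_le (h : IsUniqueMaximizer g K p) {x : F} (hx : x ∈ K) :
    ⟪g, x⟫ ≤ ⟪g, p⟫ := by
  rcases eq_or_ne x p with rfl | hxp
  · rfl
  · exact (h.2 x hx hxp).le

lemma IsUniqueMaximizer.image {f : F → F} (h : IsUniqueMaximizer g K p)
    (hf : ∀ x, ⟪g, f x⟫ = ⟪g, x⟫) (hfp : f p = p) : IsUniqueMaximizer g (f '' K) p := by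
  refine ⟨hfp ▸ Set.mem_image_of_mem f h.1, ?_⟩
  rintro _ ⟨x, hx, rfl⟩ hxp
  rw [hf]
  exact h.2 x hx fun hx' => hxp (hx' ▸ hfp)

lemma isUniqueMaximizer_of_inter_eq_singleton {α : ℝ}
    (h : K ∩ {y | α ≤ ⟪g, y⟫} = {p}) : IsUniqueMaximizer g K p := by
  have hp : p ∈ K ∩ {y | α ≤ ⟪g, y⟫} := h ▸ rfl
  refine ⟨hp.1, fun x hx hxp => ?_⟩
  have hx' : x ∉ K ∩ {y | α ≤ ⟪g, y⟫} := h ▸ hxp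
  simp only [Set.mem_inter_iff, Set.mem_ofPred_eq, not_and, not_le] at hx'
  exact (hx' hx).trans_le hp.2

lemma isUniqueMaximizer_neg_of_inter_eq_singleton {β : ℝ}
    (h : K ∩ {y | ⟪g, y⟫ ≤ β} = {p}) : IsUniqueMaximizer (-g) K p := by
  refine isUniqueMaximizer_of_inter_eq_singleton (α := -β) (Eq.trans ?_ h)
  simp only [inner_neg_left, neg_le_neg_iff]

lemma homothety_eq_of_isUniqueMaximizer {S₁ S₂ : Set F} {z q : F} {l : ℝ}
    (h : S₁ = (fun x => z + l • x) '' S₂) (hp : p ∈ S₂)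
    (hmax : ∀ x ∈ S₂, l * ⟪g, x⟫ ≤ l * ⟪g, p⟫) (hq : IsUniqueMaximizer g S₁ q) :
    z + l • p = q := by
  have hmem : z + l • p ∈ S₁ := h ▸ Set.mem_image_of_mem _ hp
  by_contra hne
  obtain ⟨x, hx, hxq⟩ : q ∈ (fun x => z + l • x) '' S₂ := h ▸ hq.1
  have := hq.2 _ hmem hne
  rw [← hxq] at this
  simp only [inner_add_right, real_inner_smul_right] at this
  linarith [hmax x hx]

lemma eq_or_eq_neg_of_homothety_of_isUniqueMaximizer {S₁ S₂ : Set F} {z : F} {l : ℝ}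
    (hl : l ≠ 0) (h : S₁ = (fun x => z + l • x) '' S₂) (hp : p ≠ 0)
    (hmax₁ : IsUniqueMaximizer g S₁ p) (hmin₁ : IsUniqueMaximizer (-g) S₁ (-p))
    (hmax₂ : IsUniqueMaximizer g S₂ p) (hmin₂ : IsUniqueMaximizer (-g) S₂ (-p)) :
    S₁ = S₂ ∨ S₁ = -S₂ := by
  have hle₂ : ∀ x ∈ S₂, ⟪g, -p⟫ ≤ ⟪g, x⟫ ∧ ⟪g, x⟫ ≤ ⟪g, p⟫ := fun x hx =>
    ⟨by simpa only [inner_neg_left, neg_le_neg_iff] using hmin₂.inner_le hx, hmax₂.inner_le hx⟩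
  rcases hl.lt_or_gt with hneg | hpos
  · have e₁ : z + l • p = -p := homothety_eq_of_isUniqueMaximizer (g := -g) h hmax₂.1
      (fun x hx => by simpa only [inner_neg_left, mul_neg, neg_le_neg_iff]
        using mul_le_mul_of_nonpos_left (hle₂ x hx).2 hneg.le) hmin₁
    have e₂ : z + l • -p = p := homothety_eq_of_isUniqueMaximizer h hmin₂.1
      (fun x hx => mul_le_mul_of_nonpos_left (hle₂ x hx).1 hneg.le) hmax₁
    have hl₁ : l = -1 := by
      have : (l + 1) • p = 0 := by linear_combination (norm := module) (2⁻¹ : ℝ) • (e₁ - e₂)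
      linarith [(smul_eq_zero.1 this).resolve_right hp]
    have hz : z = 0 := by
      subst hl₁
      linear_combination (norm := module) e₁
    subst hl₁ hz
    right
    simp [h]
  · have e₁ : z + l • p = p := homothety_eq_of_isUniqueMaximizer h hmax₂.1
      (fun x hx => mul_le_mul_of_nonneg_left (hle₂ x hx).2 hpos.le) hmax₁
    have e₂ : z + l • -p = -p := homothety_eq_of_isUniqueMaximizer (g := -g) h hmin₂.1
      (fun x hx => by simpa only [inner_neg_left, mul_neg, neg_le_neg_iff]
        using mul_le_mul_of_nonneg_left (hle₂ x hx).1 hpos.le) hmin₁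
    have hl₁ : l = 1 := by
      have : (l - 1) • p = 0 := by linear_combination (norm := module) (2⁻¹ : ℝ) • (e₁ - e₂)
      linarith [(smul_eq_zero.1 this).resolve_right hp]
    have hz : z = 0 := by
      subst hl₁
      linear_combination (norm := module) e₁
    subst hl₁ hz
    left
    simp [h]

end UniqueMaximizer

section Projection

variable {n : ℕ} (L : Submodule ℝ (EuclideanSpace ℝ (Fin n)))

lemma inner_planeProj_zero {y : EuclideanSpace ℝ (Fin n)} (hy : y ∈ L)
    (x : EuclideanSpace ℝ (Fin n)) : ⟪y, planeProj 0 L x⟫ = ⟪y, x⟫ := by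
  have h := L.inner_right_of_mem_orthogonal hy (L.sub_starProjection_mem_orthogonal x)
  rw [inner_sub_right, sub_eq_zero] at h
  simpa [planeProj] using h.symm

lemma planeProj_zero_of_mem {x : EuclideanSpace ℝ (Fin n)} (hx : x ∈ L) :
    planeProj 0 L x = x := by
  simpa [planeProj] using L.starProjection_eq_self_iff.2 hx

lemma supportFun_image_planeProj_zero {y : EuclideanSpace ℝ (Fin n)} (hy : y ∈ L)
    (K : Set (EuclideanSpace ℝ (Fin n))) :
    supportFun (planeProj 0 L '' K) y = supportFun K y := by
  simp only [supportFun, Set.image_image, inner_planeProj_zero L hy]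

lemma isCompact_image_planeProj {K : Set (EuclideanSpace ℝ (Fin n))} (hK : IsCompact K)
    (p : EuclideanSpace ℝ (Fin n)) : IsCompact (planeProj p L '' K) :=
  hK.image (continuous_const.add ((L.subtypeL.comp L.orthogonalProjectionOnto).continuous.comp
    (continuous_id.sub continuous_const)))

end Projection

lemma exists_hyperplane_mem_mem {n : ℕ} (hn : 3 ≤ n) (v w : EuclideanSpace ℝ (Fin n)) :
    ∃ L : Submodule ℝ (EuclideanSpace ℝ (Fin n)),
      Module.finrank ℝ L = n - 1 ∧ v ∈ L ∧ w ∈ L := by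
  classical
  set W := Submodule.span ℝ ({v, w} : Set (EuclideanSpace ℝ (Fin n)))
  have hW : Module.finrank ℝ W ≤ 2 := by
    have h := (finrank_span_finset_le_card (R := ℝ) {v, w}).trans Finset.card_le_two
    rwa [Set.finrank, Finset.coe_pair] at h
  have hWperp : Wᗮ ≠ ⊥ := by
    intro h
    have := W.finrank_add_finrank_orthogonal
    rw [h, finrank_bot, finrank_euclideanSpace_fin] at this
    omega
  obtain ⟨u, hu, hu0⟩ := (Submodule.ne_bot_iff _).1 hWperp
  refine ⟨(ℝ ∙ u)ᗮ, ?_, ?_, ?_⟩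
  · have := (ℝ ∙ u).finrank_add_finrank_orthogonal
    rw [finrank_span_singleton hu0, finrank_euclideanSpace_fin] at this
    omega
  all_goals
    rw [Submodule.mem_orthogonal_singleton_iff_inner_right, real_inner_comm]
    exact W.inner_right_of_mem_orthogonal (Submodule.subset_span (by simp)) hu

section Gluing

open Filter Topology

variable {F : Type*} [NormedAddCommGroup F] [InnerProductSpace ℝ F] {f₁ f₂ : F → ℝ}

lemma eq_comp_neg_of_eq_inner_add (hf₁ : Continuous f₁) (hf₂ : Continuous f₂)
    (hcover : ∀ w, f₁ w = f₂ w ∨ f₁ w = f₂ (-w)) {L : Submodule ℝ F} {z : F}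
    (hrel : ∀ w ∈ L, f₁ w = ⟪w, z⟫ + f₂ w) {a b : F} (ha : a ∈ L) (hb : b ∈ L)
    (hb' : f₁ b ≠ f₂ b) : f₁ a = f₂ (-a) := by
  have hoff : ∀ w ∈ L, ⟪w, z⟫ ≠ 0 → f₁ w = f₂ (-w) := fun w hw hwz =>
    (hcover w).resolve_left (by rw [hrel w hw]; simpa using hwz)
  have hbz : ⟪b, z⟫ ≠ 0 := fun h => hb' (by rw [hrel b hb, h, zero_add])
  by_cases haz : ⟪a, z⟫ ≠ 0
  · exact hoff a ha haz
  have hlim : Tendsto (fun t : ℝ => a + t • b) (𝓝[≠] 0) (𝓝 a) :=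
    ((continuous_const.add (continuous_id.smul continuous_const)).tendsto' 0 a
      (by simp)).mono_left nhdsWithin_le_nhds
  refine (isClosed_eq hf₁ (hf₂.comp continuous_neg)).mem_of_tendsto hlim ?_
  filter_upwards [self_mem_nhdsWithin] with t ht
  refine hoff _ (L.add_mem ha (L.smul_mem t hb)) ?_
  rw [inner_add_left, real_inner_smul_left, not_not.1 haz, zero_add]
  exact mul_ne_zero ht hbz

lemma eq_or_eq_comp_neg_of_forall_exists_submodule (hf₁ : Continuous f₁)
    (hf₂ : Continuous f₂) (hcover : ∀ w, f₁ w = f₂ w ∨ f₁ w = f₂ (-w))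
    (hpair : ∀ a b : F, ∃ L : Submodule ℝ F, a ∈ L ∧ b ∈ L ∧ ∃ z : F,
      (∀ w ∈ L, f₁ w = ⟪w, z⟫ + f₂ w) ∨ ∀ w ∈ L, f₁ w = ⟪w, z⟫ + f₂ (-w)) :
    (∀ w, f₁ w = f₂ w) ∨ ∀ w, f₁ w = f₂ (-w) := by
  by_contra! h
  obtain ⟨⟨b, hb⟩, a, ha⟩ := h
  obtain ⟨L, haL, hbL, z, hrel | hrel⟩ := hpair a b
  · exact ha (eq_comp_neg_of_eq_inner_add hf₁ hf₂ hcover hrel haL hbL hb)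
  · refine hb ?_
    simpa using eq_comp_neg_of_eq_inner_add hf₁ (hf₂.comp continuous_neg)
      (fun w => by simpa only [Function.comp_apply, neg_neg] using (hcover w).symm) hrel hbL haL ha

end Gluing

section ConvexBodies

variable {n : ℕ} {K₁ K₂ : Set (EuclideanSpace ℝ (Fin n))}

lemma supportFun_eq_and_eq_or_eq_neg_and_eq_neg (hn : 3 ≤ n)
    (hproj : ∀ L : Submodule ℝ (EuclideanSpace ℝ (Fin n)), Module.finrank ℝ L = n - 1 →
      Homothetic (planeProj 0 L '' K₁) (planeProj 0 L '' K₂))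
    {g p : EuclideanSpace ℝ (Fin n)} (hpg : p ∈ ℝ ∙ g) (hp : p ≠ 0)
    (hmax₁ : IsUniqueMaximizer g K₁ p) (hmin₁ : IsUniqueMaximizer (-g) K₁ (-p))
    (hmax₂ : IsUniqueMaximizer g K₂ p) (hmin₂ : IsUniqueMaximizer (-g) K₂ (-p))
    (y : EuclideanSpace ℝ (Fin n)) :
    (supportFun K₁ y = supportFun K₂ y ∧ supportFun K₁ (-y) = supportFun K₂ (-y)) ∨
      (supportFun K₁ y = supportFun K₂ (-y) ∧ supportFun K₁ (-y) = supportFun K₂ y) := by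
  obtain ⟨L, hL, hgL, hyL⟩ := exists_hyperplane_mem_mem hn g y
  have hpL : p ∈ L := (Submodule.span_singleton_le_iff_mem g L).2 hgL hpg
  have hproj_max : ∀ {K : Set (EuclideanSpace ℝ (Fin n))} {v q}, v ∈ L → q ∈ L →
      IsUniqueMaximizer v K q → IsUniqueMaximizer v (planeProj 0 L '' K) q :=
    fun hv hq h => h.image (inner_planeProj_zero L hv) (planeProj_zero_of_mem L hq)
  obtain ⟨z, l, hl, himg⟩ := hproj L hL
  have hgL' := L.neg_mem hgL
  have hpL' := L.neg_mem hpL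
  have hyL' := L.neg_mem hyL
  rcases eq_or_eq_neg_of_homothety_of_isUniqueMaximizer hl himg hp
    (hproj_max hgL hpL hmax₁) (hproj_max hgL' hpL' hmin₁)
    (hproj_max hgL hpL hmax₂) (hproj_max hgL' hpL' hmin₂) with h | h
  · left
    constructor
    · rw [← supportFun_image_planeProj_zero L hyL K₁, h, supportFun_image_planeProj_zero L hyL]
    · rw [← supportFun_image_planeProj_zero L hyL' K₁, h, supportFun_image_planeProj_zero L hyL']
  · right
    constructor
    · rw [← supportFun_image_planeProj_zero L hyL K₁, h, supportFun_neg_set,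
        supportFun_image_planeProj_zero L hyL']
    · rw [← supportFun_image_planeProj_zero L hyL' K₁, h, supportFun_neg_set, neg_neg,
        supportFun_image_planeProj_zero L hyL]

lemma exists_supportFun_eq_inner_add (hc₂ : IsCompact K₂) (h0 : 0 ∈ K₂)
    (hD : ∀ y, (supportFun K₁ y = supportFun K₂ y ∧ supportFun K₁ (-y) = supportFun K₂ (-y)) ∨
      (supportFun K₁ y = supportFun K₂ (-y) ∧ supportFun K₁ (-y) = supportFun K₂ y))
    {L : Submodule ℝ (EuclideanSpace ℝ (Fin n))}
    (hhom : Homothetic (planeProj 0 L '' K₁) (planeProj 0 L '' K₂)) :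
    ∃ z, (∀ w ∈ L, supportFun K₁ w = ⟪w, z⟫ + supportFun K₂ w) ∨
      ∀ w ∈ L, supportFun K₁ w = ⟪w, z⟫ + supportFun K₂ (-w) := by
  obtain ⟨z, l, hl, himg⟩ := hhom
  have hrel : ∀ w ∈ L, supportFun K₁ w = ⟪w, z⟫ + supportFun K₂ (l • w) := fun w hw => by
    rw [← supportFun_image_planeProj_zero L hw K₁, himg,
      supportFun_homothety (isCompact_image_planeProj L hc₂ 0)
        ⟨0, 0, h0, planeProj_zero_of_mem L L.zero_mem⟩,
      supportFun_image_planeProj_zero L (L.smul_mem l hw)]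
  have hwidth : ∀ y, supportFun K₁ y + supportFun K₁ (-y) =
      supportFun K₂ y + supportFun K₂ (-y) := fun y => by
    rcases hD y with h | h <;> linarith [h.1, h.2]
  by_cases hdeg : ∀ w ∈ L, supportFun K₂ w + supportFun K₂ (-w) = 0
  · -- `K₂` has zero width along `L`, and `0 ∈ K₂`, so `supportFun K₂` vanishes on `L`
    refine ⟨0, Or.inl fun w hw => ?_⟩
    have hnn := supportFun_nonneg hc₂ h0 w
    have hnn' := supportFun_nonneg hc₂ h0 (-w)
    rw [inner_zero_right, zero_add]
    rcases hD w with h | h <;> linarith [h.1, hdeg w hw]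
  push Not at hdeg
  obtain ⟨y, hy, hWy⟩ := hdeg
  have hscale : supportFun K₂ y + supportFun K₂ (-y) =
      supportFun K₂ (l • y) + supportFun K₂ (l • -y) := by
    rw [← hwidth, hrel y hy, hrel (-y) (L.neg_mem hy), inner_neg_left]
    ring
  rcases hl.lt_or_gt with hneg | hpos
  · have hl₁ : l = -1 := by
      rw [show l • y = (-l) • -y by simp, show l • -y = (-l) • y by simp,
        supportFun_smul (neg_nonneg.2 hneg.le), supportFun_smul (neg_nonneg.2 hneg.le)] at hscale
      have : (l + 1) * (supportFun K₂ y + supportFun K₂ (-y)) = 0 := by linarith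
      linarith [(mul_eq_zero.1 this).resolve_right hWy]
    exact ⟨z, Or.inr fun w hw => by rw [hrel w hw, hl₁, neg_one_smul]⟩
  · have hl₁ : l = 1 := by
      rw [supportFun_smul hpos.le, supportFun_smul hpos.le] at hscale
      have : (l - 1) * (supportFun K₂ y + supportFun K₂ (-y)) = 0 := by linarith
      linarith [(mul_eq_zero.1 this).resolve_right hWy]
    exact ⟨z, Or.inl fun w hw => by rw [hrel w hw, hl₁, one_smul]⟩

end ConvexBodies

theorem eq_or_eq_neg_of_common_exposed_diameter_general
    (n : ℕ) (hn : 3 ≤ n)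
    (K₁ K₂ : Set (EuclideanSpace ℝ (Fin n)))
    (hc₁ : IsCompact K₁) (hc₂ : IsCompact K₂)
    (hcv₁ : Convex ℝ K₁) (hcv₂ : Convex ℝ K₂)
    (hproj : ∀ (p : EuclideanSpace ℝ (Fin n)) (L : Submodule ℝ (EuclideanSpace ℝ (Fin n))),
      Module.finrank ℝ L = n - 1 →
      Homothetic (planeProj p L '' K₁) (planeProj p L '' K₂))
    (x₀ z₀ : EuclideanSpace ℝ (Fin n)) (g : EuclideanSpace ℝ (Fin n)) (α β : ℝ)
    (hg : ‖g‖ = 1)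
    (hmid : x₀ + z₀ = 0)
    (horth : ∃ c : ℝ, c ≠ 0 ∧ x₀ - z₀ = c • g)
    (hP₁ : K₁ ∩ {y | α ≤ ⟪g, y⟫} = {x₀}) (hP₂ : K₂ ∩ {y | α ≤ ⟪g, y⟫} = {x₀})
    (hQ₁ : K₁ ∩ {y | ⟪g, y⟫ ≤ β} = {z₀}) (hQ₂ : K₂ ∩ {y | ⟪g, y⟫ ≤ β} = {z₀}) :
    K₂ = K₁ ∨ K₂ = -K₁ := by
  obtain ⟨c, hc, hcg⟩ := horth
  obtain rfl : z₀ = -x₀ := eq_neg_of_add_eq_zero_right hmid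
  have hx₀g : x₀ = (c / 2) • g := by linear_combination (norm := module) (2⁻¹ : ℝ) • hcg
  have hx₀ : x₀ ≠ 0 := hx₀g ▸ smul_ne_zero (div_ne_zero hc two_ne_zero)
    (norm_ne_zero_iff.1 (hg ▸ one_ne_zero))
  have hmax₁ := isUniqueMaximizer_of_inter_eq_singleton hP₁
  have hmax₂ := isUniqueMaximizer_of_inter_eq_singleton hP₂
  have hmin₁ := isUniqueMaximizer_neg_of_inter_eq_singleton hQ₁
  have hmin₂ := isUniqueMaximizer_neg_of_inter_eq_singleton hQ₂
  have h0 : (0 : EuclideanSpace ℝ (Fin n)) ∈ K₂ := by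
    simpa using hcv₂ hmax₂.1 hmin₂.1 (by norm_num : (0 : ℝ) ≤ 1 / 2)
      (by norm_num : (0 : ℝ) ≤ 1 / 2) (by norm_num)
  have hD := supportFun_eq_and_eq_or_eq_neg_and_eq_neg hn (hproj 0)
    (Submodule.mem_span_singleton.2 ⟨c / 2, hx₀g.symm⟩) hx₀ hmax₁ hmin₁ hmax₂ hmin₂
  rcases eq_or_eq_comp_neg_of_forall_exists_submodule (continuous_supportFun hc₁)
      (continuous_supportFun hc₂) (fun w => (hD w).imp And.left And.left) (fun a b => by
        obtain ⟨L, hL, ha, hb⟩ := exists_hyperplane_mem_mem hn a b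
        exact ⟨L, ha, hb, exists_supportFun_eq_inner_add hc₂ h0 hD (hproj 0 L hL)⟩) with h | h
  · exact .inl (eq_of_supportFun_eq hc₁ hc₂ hcv₁ hcv₂ ⟨_, hmax₁.1⟩ ⟨_, hmax₂.1⟩ (funext h)).symm
  · refine .inr ?_
    rw [eq_of_supportFun_eq hc₁ hc₂.neg hcv₁ hcv₂.neg ⟨_, hmax₁.1⟩ ⟨_, Set.neg_mem_neg.2 hmax₂.1⟩
      (funext fun w => by rw [h, supportFun_neg_set]), neg_neg]

/-- Suppose the compact convex sets `K₁, K₂ ⊆ ℝⁿ` (`n ≥ 3`), each with more than one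
point, have homothetic projections on every hyperplane, and suppose `[x₀, z₀]` is a
common exposed diameter of `K₁` and `K₂` with midpoint at the origin, exposed for both
sets by the disjoint opposite closed halfspaces `P₀ = {y : α ≤ ⟪g, y⟫}` and
`Q₀ = {y : ⟪g, y⟫ ≤ β}` whose boundary hyperplanes are orthogonal to `[x₀, z₀]`
(i.e. `x₀ - z₀` is a nonzero multiple of `g`).  Then `K₂ = K₁` or `K₂ = -K₁`. -/
theorem eq_or_eq_neg_of_common_exposed_diameter
    (n : ℕ) (hn : 3 ≤ n)
    (K₁ K₂ : Set (EuclideanSpace ℝ (Fin n)))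
    (hc₁ : IsCompact K₁) (hc₂ : IsCompact K₂)
    (hcv₁ : Convex ℝ K₁) (hcv₂ : Convex ℝ K₂)
    (hpts₁ : ∃ a ∈ K₁, ∃ b ∈ K₁, a ≠ b) (hpts₂ : ∃ a ∈ K₂, ∃ b ∈ K₂, a ≠ b)
    (hproj : ∀ (p : EuclideanSpace ℝ (Fin n)) (L : Submodule ℝ (EuclideanSpace ℝ (Fin n))),
      Module.finrank ℝ L = n - 1 →
      Homothetic (planeProj p L '' K₁) (planeProj p L '' K₂))
    (x₀ z₀ : EuclideanSpace ℝ (Fin n)) (g : EuclideanSpace ℝ (Fin n)) (α β : ℝ)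
    (hg : ‖g‖ = 1) (hβα : β < α)
    (hmid : x₀ + z₀ = 0)
    (horth : ∃ c : ℝ, c ≠ 0 ∧ x₀ - z₀ = c • g)
    (hP₁ : K₁ ∩ {y | α ≤ ⟪g, y⟫} = {x₀}) (hP₂ : K₂ ∩ {y | α ≤ ⟪g, y⟫} = {x₀})
    (hQ₁ : K₁ ∩ {y | ⟪g, y⟫ ≤ β} = {z₀}) (hQ₂ : K₂ ∩ {y | ⟪g, y⟫ ≤ β} = {z₀}) :
    K₂ = K₁ ∨ K₂ = -K₁ :=
  eq_or_eq_neg_of_common_exposed_diameter_general n hn K₁ K₂ hc₁ hc₂ hcv₁ hcv₂ hproj x₀ z₀ g α β hg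
    hmid horth hP₁ hP₂ hQ₁ hQ₂
end

section
/- Let K₁ and K₂ be nonempty closed convex sets in ℝⁿ and let m be an integer with 3 ≤ m ≤ n − 1. If for every m-dimensional linear subspace L of ℝⁿ the orthogonal projections π_L(K₁) and π_L(K₂) are homothetic, then the linearity spaces of K₁ and K₂ coincide: lin K₁ = lin K₂. -/
/-- The recession cone of a set `K ⊆ ℝⁿ`:
`rec K = {y : x + α • y ∈ K for all x ∈ K and all α ≥ 0}`. -/
def recCone {n : ℕ} (K : Set (EuclideanSpace ℝ (Fin n))) :
    Set (EuclideanSpace ℝ (Fin n)) :=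
  {y | ∀ x ∈ K, ∀ α : ℝ, 0 ≤ α → x + α • y ∈ K}

/-- The linearity space of a set `K ⊆ ℝⁿ`: `lin K = (rec K) ∩ (-rec K)`. -/
def linSpace {n : ℕ} (K : Set (EuclideanSpace ℝ (Fin n))) :
    Set (EuclideanSpace ℝ (Fin n)) :=
  recCone K ∩ {y | -y ∈ recCone K}

/-!
A vector `y` lies in `lin K` iff `K` contains every line `x + ℝ y` through its points. Linear
maps send such lines to lines, so `π_L y ∈ lin (π_L K)` whenever `y ∈ lin K`. Conversely, if
some point `x + α y` of such a line lies outside the closed convex set `K`, a hyperplane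
`⟪v, ·⟫ = u` strictly separates it from `K`, and this separation survives projection onto any
`m`-dimensional `L ∋ v`, because `⟪v, π_L w⟫ = ⟪v, w⟫`. Hence `y ∈ lin K` iff
`π_L y ∈ lin (π_L K)` for all `m`-dimensional `L`, and homothetic sets have the same linearity
space.
-/

open Module Submodule InnerProductSpace

theorem Submodule.exists_le_finrank_eq {K V : Type*} [DivisionRing K] [AddCommGroup V]
    [Module K V] [FiniteDimensional K V] (p : Submodule K V) {m : ℕ}
    (hpm : finrank K p ≤ m) (hm : m ≤ finrank K V) : ∃ W, p ≤ W ∧ finrank K W = m := by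
  induction m, hpm using Nat.le_induction with
  | base => exact ⟨p, le_rfl, rfl⟩
  | succ k _ ih =>
    obtain ⟨W, hpW, hW⟩ := ih (by omega)
    have hW_ne : W ≠ ⊤ := fun h => by rw [h, finrank_top] at hW; omega
    obtain ⟨x, -, hx⟩ := SetLike.exists_of_lt (lt_top_iff_ne_top.mpr hW_ne)
    exact ⟨W ⊔ span K {x}, le_sup_of_le_left hpW, by rw [finrank_sup_span_singleton hx, hW]⟩

theorem Submodule.exists_mem_finrank_eq {K V : Type*} [DivisionRing K] [AddCommGroup V]
    [Module K V] [FiniteDimensional K V] (v : V) {m : ℕ} (h1m : 1 ≤ m)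
    (hm : m ≤ finrank K V) : ∃ W : Submodule K V, v ∈ W ∧ finrank K W = m := by
  obtain ⟨W, hvW, hW⟩ := (K ∙ v).exists_le_finrank_eq
    ((finrank_span_le_card {v}).trans (by simpa using h1m)) hm
  exact ⟨W, hvW (mem_span_singleton_self v), hW⟩

theorem exists_forall_starProjection_notMem_image {E : Type*} [NormedAddCommGroup E]
    [InnerProductSpace ℝ E] [CompleteSpace E] {K : Set E} (hcl : IsClosed K) (hcv : Convex ℝ K)
    {p : E} (hp : p ∉ K) :
    ∃ v : E, ∀ (L : Submodule ℝ E) [L.HasOrthogonalProjection], v ∈ L →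
      L.starProjection p ∉ L.starProjection '' K := by
  obtain ⟨f, u, hfK, hfp⟩ := geometric_hahn_banach_closed_point hcv hcl hp
  refine ⟨(toDual ℝ E).symm f, fun L _ hv ⟨x, hx, hxp⟩ => ?_⟩
  -- `f = ⟪v, ·⟫` with `v ∈ L`, and `π_L` is self-adjoint and fixes `v`
  have hf : ∀ w, f (L.starProjection w) = f w := fun w => by
    rw [← toDual_symm_apply, ← inner_starProjection_left_eq_right, starProjection_eq_self_iff.mpr hv,
      toDual_symm_apply]
  have := congrArg f hxp
  rw [hf, hf] at this
  linarith [hfK x hx]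

section

variable {n : ℕ} {X K : Set (EuclideanSpace ℝ (Fin n))} {y : EuclideanSpace ℝ (Fin n)}

theorem mem_linSpace_iff : y ∈ linSpace X ↔ ∀ x ∈ X, ∀ α : ℝ, x + α • y ∈ X := by
  refine ⟨fun hy x hx α => ?_, fun h => ⟨fun x hx α _ => h x hx α, fun x hx α _ => ?_⟩⟩
  · rcases le_total 0 α with hα | hα
    · exact hy.1 x hx α hα
    · simpa using hy.2 x hx (-α) (neg_nonneg.mpr hα)
  · simpa using h x hx (-α)

theorem linSpace_image_homothety {z : EuclideanSpace ℝ (Fin n)} {l : ℝ} (hl : l ≠ 0) :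
    linSpace ((fun x => z + l • x) '' X) = linSpace X := by
  ext y
  have hinj : Function.Injective fun x : EuclideanSpace ℝ (Fin n) => z + l • x :=
    fun a b h => smul_right_injective _ hl (add_left_cancel h)
  have hshift : ∀ x (α : ℝ), z + l • x + α • y = z + l • (x + (α / l) • y) := fun x α => by
    rw [smul_add, smul_smul, mul_div_cancel₀ α hl, add_assoc]
  simp only [mem_linSpace_iff, Set.forall_mem_image, hshift, hinj.mem_set_image]
  exact forall₂_congr fun x _ =>
    ⟨fun h α => by simpa [mul_div_cancel_right₀ α hl] using h (α * l), fun h α => h _⟩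

theorem Homothetic.linSpace_eq {X₁ X₂ : Set (EuclideanSpace ℝ (Fin n))} (h : Homothetic X₁ X₂) :
    linSpace X₁ = linSpace X₂ := by
  obtain ⟨z, l, hl, rfl⟩ := h
  exact linSpace_image_homothety hl

theorem map_mem_linSpace_image (f : EuclideanSpace ℝ (Fin n) →ₗ[ℝ] EuclideanSpace ℝ (Fin n))
    (hy : y ∈ linSpace K) : f y ∈ linSpace (f '' K) := by
  rw [mem_linSpace_iff] at hy ⊢
  rintro _ ⟨x, hx, rfl⟩ α
  exact ⟨x + α • y, hy x hx α, by simp⟩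

theorem exists_finrank_eq_starProjection_notMem_linSpace {m : ℕ} (h1m : 1 ≤ m) (hmn : m ≤ n)
    (hcl : IsClosed K) (hcv : Convex ℝ K) (hy : y ∉ linSpace K) :
    ∃ L : Submodule ℝ (EuclideanSpace ℝ (Fin n)), finrank ℝ L = m ∧
      L.starProjection y ∉ linSpace (L.starProjection '' K) := by
  simp only [mem_linSpace_iff, not_forall] at hy
  obtain ⟨x, hx, α, hxα⟩ := hy
  obtain ⟨v, hv⟩ := exists_forall_starProjection_notMem_image hcl hcv hxα
  obtain ⟨L, hvL, hL⟩ := exists_mem_finrank_eq v h1m (by rwa [finrank_euclideanSpace_fin])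
  refine ⟨L, hL, fun hyL => hv L hvL ?_⟩
  simpa using (mem_linSpace_iff.mp hyL) _ ⟨x, hx, rfl⟩ α

theorem mem_linSpace_iff_forall_starProjection {m : ℕ} (h1m : 1 ≤ m) (hmn : m ≤ n)
    (hcl : IsClosed K) (hcv : Convex ℝ K) :
    y ∈ linSpace K ↔ ∀ L : Submodule ℝ (EuclideanSpace ℝ (Fin n)), finrank ℝ L = m →
      L.starProjection y ∈ linSpace (L.starProjection '' K) := by
  refine ⟨fun hy L _ => map_mem_linSpace_image L.starProjection.toLinearMap hy, fun h => ?_⟩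
  by_contra hy
  obtain ⟨L, hL, hyL⟩ := exists_finrank_eq_starProjection_notMem_linSpace h1m hmn hcl hcv hy
  exact hyL (h L hL)

end

theorem linSpace_eq_of_projections_homothetic_general
    (n m : ℕ) (hm₁ : 3 ≤ m) (hm₂ : m ≤ n - 1)
    (K₁ K₂ : Set (EuclideanSpace ℝ (Fin n)))
    (hcl₁ : IsClosed K₁) (hcl₂ : IsClosed K₂)
    (hcv₁ : Convex ℝ K₁) (hcv₂ : Convex ℝ K₂)
    (hproj : ∀ L : Submodule ℝ (EuclideanSpace ℝ (Fin n)),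
      Module.finrank ℝ L = m →
      Homothetic ((fun x => (L.orthogonalProjectionOnto x : EuclideanSpace ℝ (Fin n))) '' K₁)
        ((fun x => (L.orthogonalProjectionOnto x : EuclideanSpace ℝ (Fin n))) '' K₂)) :
    linSpace K₁ = linSpace K₂ := by
  have h1m : 1 ≤ m := by omega
  have hmn : m ≤ n := by omega
  have hlin : ∀ L : Submodule ℝ (EuclideanSpace ℝ (Fin n)), finrank ℝ L = m →
      linSpace (L.starProjection '' K₁) = linSpace (L.starProjection '' K₂) :=
    fun L hL => (hproj L hL).linSpace_eq
  ext y
  rw [mem_linSpace_iff_forall_starProjection h1m hmn hcl₁ hcv₁,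
    mem_linSpace_iff_forall_starProjection h1m hmn hcl₂ hcv₂]
  exact forall₂_congr fun L hL => by rw [hlin L hL]

/-- If the nonempty closed convex sets `K₁, K₂ ⊆ ℝⁿ` have homothetic orthogonal
projections on every `m`-dimensional linear subspace of `ℝⁿ`, where `3 ≤ m ≤ n - 1`,
then their linearity spaces coincide. -/
theorem linSpace_eq_of_projections_homothetic
    (n m : ℕ) (hm₁ : 3 ≤ m) (hm₂ : m ≤ n - 1)
    (K₁ K₂ : Set (EuclideanSpace ℝ (Fin n)))
    (hne₁ : K₁.Nonempty) (hne₂ : K₂.Nonempty)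
    (hcl₁ : IsClosed K₁) (hcl₂ : IsClosed K₂)
    (hcv₁ : Convex ℝ K₁) (hcv₂ : Convex ℝ K₂)
    (hproj : ∀ L : Submodule ℝ (EuclideanSpace ℝ (Fin n)),
      Module.finrank ℝ L = m →
      Homothetic ((fun x => (L.orthogonalProjectionOnto x : EuclideanSpace ℝ (Fin n))) '' K₁)
        ((fun x => (L.orthogonalProjectionOnto x : EuclideanSpace ℝ (Fin n))) '' K₂)) :
    linSpace K₁ = linSpace K₂ :=
  linSpace_eq_of_projections_homothetic_general n m hm₁ hm₂ K₁ K₂ hcl₁ hcl₂ hcv₁ hcv₂ hproj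
end
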